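/- arXiv:1412.4156 — 2 statements merged into one kernel-verified Lean document; each statement's English description precedes it below -/
import Mathlib

section
/- Let (rᵢⱼ) be an (n−1)×(n−1) Hermitian positive semidefinite matrix with eigenvalues λ₁ ≤ ⋯ ≤ λ_{n−1}. For every 1 ≤ q ≤ n−1 and every alternating array (u_J) of complex numbers indexed by strictly increasing multi-indices J ⊆ {1,…,n−1} of length k ≥ q, one has Σ'_{|K|=k−1} Σ_{i,j} rᵢⱼ u_{iK} \overline{u_{jK}} ≥ (Σ_{j=1}^{q} λⱼ) · Σ'_{|J|=k} |u_J|², where u_{iK} is the alternating extension of u. -/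
/-!
Write `r = U diag(λ) U*` with `U` unitary. Transforming the array by the `(k+1)`-fold Kronecker
power of `U` preserves alternation and the `ℓ²` norm, and turns the Levi form, summed over all
tuples `K`, into `∑_J λ_{J₀} |w_J|²`. Since `|w_J|` is symmetric in `J`, this is
`(k+1)⁻¹ ∑_J (∑_l λ_{J_l}) |w_J|²`, and `w_J = 0` unless the entries of `J` are distinct; for
such `J`, since the eigenvalues are nonnegative and `k + 1 ≥ q`, `∑_l λ_{J_l}` is at least the
sum of the `q` smallest eigenvalues. Sums over increasing multi-indices are the sums over all
tuples divided by a factorial.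
-/

open Finset Matrix

variable {ι R : Type*} {N : ℕ}

def IsAlternatingArray [Ring R] (u : (Fin N → ι) → R) : Prop :=
  ∀ (σ : Equiv.Perm (Fin N)) (J : Fin N → ι), u (J ∘ σ) = ((Equiv.Perm.sign σ : ℤ) : R) * u J

namespace IsAlternatingArray

theorem eq_zero_of_not_injective [Ring R] [IsAddTorsionFree R] {u : (Fin N → ι) → R}
    (hu : IsAlternatingArray u) {J : Fin N → ι} (hJ : ¬ Function.Injective J) : u J = 0 := by
  obtain ⟨a, b, hab, hne⟩ : ∃ a b, J a = J b ∧ a ≠ b := by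
    simpa [Function.Injective] using hJ
  have hswap : J ∘ Equiv.swap a b = J := by
    funext x
    rcases eq_or_ne x a with rfl | hxa
    · simp [hab]
    rcases eq_or_ne x b with rfl | hxb
    · simp [hab]
    · simp [Equiv.swap_apply_of_ne_of_ne hxa hxb]
  have := hu (Equiv.swap a b) J
  rw [hswap, Equiv.Perm.sign_swap hne] at this
  simpa using self_eq_neg.mp (by simpa using this)

theorem norm_comp [NormedRing R] [NormOneClass R] {u : (Fin N → ι) → R}
    (hu : IsAlternatingArray u) (σ : Equiv.Perm (Fin N)) (J : Fin N → ι) :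
    ‖u (J ∘ σ)‖ = ‖u J‖ := by
  rcases Int.units_eq_one_or (Equiv.Perm.sign σ) with h | h <;> simp [hu σ J, h]

end IsAlternatingArray

theorem Fintype.sum_tuple_comp_perm [Fintype ι] {M : Type*} [AddCommMonoid M]
    (σ : Equiv.Perm (Fin N)) (f : (Fin N → ι) → M) :
    ∑ J, f (J ∘ σ) = ∑ J, f J :=
  Equiv.sum_comp (σ.symm.arrowCongr (Equiv.refl ι)) f

theorem Fintype.sum_tuple_succ [Fintype ι] {M : Type*} [AddCommMonoid M] {k : ℕ}
    (f : (Fin (k + 1) → ι) → M) : ∑ J, f J = ∑ i, ∑ K, f (Fin.cons i K) := by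
  rw [← (Fin.consEquiv fun _ => ι).sum_comp, Fintype.sum_prod_type]
  rfl

theorem strictMono_comp_sort_of_injective [LinearOrder ι] {J : Fin N → ι}
    (hJ : Function.Injective J) : StrictMono (J ∘ Tuple.sort J) :=
  (Tuple.monotone_sort J).strictMono_of_injective (hJ.comp (Tuple.sort J).injective)

noncomputable def permProdStrictMonoEquiv (N : ℕ) (ι : Type*) [LinearOrder ι] :
    Equiv.Perm (Fin N) × {J : Fin N → ι // StrictMono J} ≃
      {J : Fin N → ι // Function.Injective J} :=
  Equiv.ofBijective (fun x => ⟨x.2.1 ∘ x.1, x.2.2.injective.comp x.1.injective⟩) <| by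
    constructor
    · rintro ⟨σ₁, J₁, hJ₁⟩ ⟨σ₂, J₂, hJ₂⟩ h
      have h : J₁ ∘ σ₁ = J₂ ∘ σ₂ := congrArg Subtype.val h
      have hJ : J₁ = J₂ := by
        rw [← hJ₁.range_inj hJ₂, ← σ₁.surjective.range_comp, h, σ₂.surjective.range_comp]
      subst hJ
      have hσ : σ₁ = σ₂ := Equiv.ext fun i => hJ₁.injective (congrFun h i)
      simp [hσ]
    · rintro ⟨J, hJ⟩
      refine ⟨((Tuple.sort J)⁻¹, ⟨_, strictMono_comp_sort_of_injective hJ⟩), ?_⟩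
      ext i
      simp

@[simp]
theorem coe_permProdStrictMonoEquiv_apply [LinearOrder ι]
    (x : Equiv.Perm (Fin N) × {J : Fin N → ι // StrictMono J}) :
    (permProdStrictMonoEquiv N ι x : Fin N → ι) = x.2.1 ∘ x.1 :=
  rfl

theorem sum_eq_factorial_smul_sum_strictMono [Fintype ι] [LinearOrder ι] {M : Type*}
    [AddCommMonoid M] (f : (Fin N → ι) → M) (hf : ∀ (σ : Equiv.Perm (Fin N)) J, f (J ∘ σ) = f J)
    (hf₀ : ∀ J, ¬ Function.Injective J → f J = 0) :
    ∑ J, f J = N.factorial • ∑ J, if StrictMono J then f J else 0 := by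
  classical
  have hinj : ∑ J, f J = ∑ J : {J : Fin N → ι // Function.Injective J}, f J := by
    rw [← sum_filter_add_sum_filter_not univ Function.Injective,
      sum_eq_zero fun J hJ => hf₀ J (mem_filter.1 hJ).2, add_zero]
    exact sum_subtype _ (by simp) f
  have hmono : ∑ J, (if StrictMono J then f J else 0)
      = ∑ J : {J : Fin N → ι // StrictMono J}, f J := by
    rw [← sum_filter]
    exact sum_subtype _ (by simp) f
  rw [hinj, hmono, ← (permProdStrictMonoEquiv N ι).sum_comp, Fintype.sum_prod_type]
  simp [hf, Fintype.card_perm]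

theorem sum_sum_apply_mul_eq_card_smul [Fintype ι] [NonUnitalNonAssocSemiring R]
    (f : ι → R) (g : (Fin N → ι) → R) (hg : ∀ (σ : Equiv.Perm (Fin N)) J, g (J ∘ σ) = g J)
    (l₀ : Fin N) :
    ∑ J, (∑ l, f (J l)) * g J = N • ∑ J, f (J l₀) * g J := by
  have hl : ∀ l, ∑ J, f (J l) * g J = ∑ J, f (J l₀) * g J := fun l => by
    rw [← Fintype.sum_tuple_comp_perm (Equiv.swap l₀ l)]
    simp [hg]
  simp_rw [sum_mul]
  rw [sum_comm]
  simp [hl]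

namespace Matrix

theorem vecMul_dotProduct_star_vecMul [Semiring R] [StarRing R] {n : Type*} [Fintype n]
    [DecidableEq n] {M : Matrix n n R} (hM : M * Mᴴ = 1) (x y : n → R) :
    (x ᵥ* M) ⬝ᵥ star (y ᵥ* M) = x ⬝ᵥ star y := by
  rw [star_vecMul, ← dotProduct_mulVec, mulVec_mulVec, hM, one_mulVec]

def kroneckerPow (N : ℕ) [CommMonoid R] (U : Matrix ι ι R) : Matrix (Fin N → ι) (Fin N → ι) R :=
  of fun I J => ∏ l, U (I l) (J l)

theorem kroneckerPow_apply [CommMonoid R] (U : Matrix ι ι R) (I J : Fin N → ι) :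
    kroneckerPow N U I J = ∏ l, U (I l) (J l) :=
  rfl

section CommSemiring

variable [CommSemiring R]

theorem kroneckerPow_one [DecidableEq ι] : kroneckerPow N (1 : Matrix ι ι R) = 1 := by
  ext I J
  simp [kroneckerPow_apply, one_apply, prod_boole, funext_iff]

theorem conjTranspose_kroneckerPow [StarRing R] (U : Matrix ι ι R) :
    (kroneckerPow N U)ᴴ = kroneckerPow N Uᴴ := by
  ext I J
  simp [kroneckerPow_apply, conjTranspose_apply]

theorem kroneckerPow_apply_comp (U : Matrix ι ι R) (σ : Equiv.Perm (Fin N)) (I J : Fin N → ι) :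
    kroneckerPow N U (I ∘ σ) (J ∘ σ) = kroneckerPow N U I J :=
  Equiv.prod_comp σ fun l => U (I l) (J l)

theorem kroneckerPow_cons {k : ℕ} (U : Matrix ι ι R) (i j : ι) (I J : Fin k → ι) :
    kroneckerPow (k + 1) U (Fin.cons i I) (Fin.cons j J) = U i j * kroneckerPow k U I J :=
  Fin.prod_univ_succ _

variable [Fintype ι]

theorem kroneckerPow_mul (U V : Matrix ι ι R) :
    kroneckerPow N U * kroneckerPow N V = kroneckerPow N (U * V) := by
  ext I J
  simp only [kroneckerPow_apply, mul_apply, ← prod_mul_distrib]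
  exact (Fintype.prod_sum fun l k => U (I l) k * V k (J l)).symm

theorem kroneckerPow_mul_conjTranspose [DecidableEq ι] [StarRing R] {U : Matrix ι ι R}
    (hU : U * Uᴴ = 1) : kroneckerPow N U * (kroneckerPow N U)ᴴ = 1 := by
  rw [conjTranspose_kroneckerPow, kroneckerPow_mul, hU, kroneckerPow_one]

end CommSemiring

def consMatrix {k : ℕ} (u : (Fin (k + 1) → ι) → R) : Matrix ι (Fin k → ι) R :=
  of fun i K => u (Fin.cons i K)

theorem consMatrix_vecMul_kroneckerPow [Fintype ι] [CommSemiring R] {k : ℕ}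
    (U : Matrix ι ι R) (u : (Fin (k + 1) → ι) → R) :
    consMatrix (u ᵥ* kroneckerPow (k + 1) U) = Uᵀ * consMatrix u * kroneckerPow k U := by
  ext p P
  simp only [consMatrix, of_apply, vecMul, dotProduct, mul_apply, transpose_apply]
  rw [Fintype.sum_tuple_succ]
  simp only [kroneckerPow_cons, sum_mul]
  rw [sum_comm]
  exact sum_congr rfl fun _ _ => sum_congr rfl fun _ _ => by ring

end Matrix

theorem IsAlternatingArray.vecMul_kroneckerPow [Fintype ι] [CommRing R]
    {u : (Fin N → ι) → R} (hu : IsAlternatingArray u) (U : Matrix ι ι R) :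
    IsAlternatingArray (u ᵥ* kroneckerPow N U) := by
  intro σ J
  simp only [vecMul, dotProduct, mul_sum]
  rw [← Fintype.sum_tuple_comp_perm σ]
  simp only [hu σ, kroneckerPow_apply_comp, mul_assoc]

theorem sum_norm_sq_vecMul {𝕜 n : Type*} [RCLike 𝕜] [Fintype n] [DecidableEq n]
    {M : Matrix n n 𝕜} (hM : M * Mᴴ = 1) (x : n → 𝕜) :
    ∑ i, ‖(x ᵥ* M) i‖ ^ 2 = ∑ i, ‖x i‖ ^ 2 := by
  have h := vecMul_dotProduct_star_vecMul hM x x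
  simp only [dotProduct, Pi.star_apply, RCLike.star_def, RCLike.mul_conj] at h
  exact_mod_cast h

def leviTerm [Fintype ι] [NonUnitalNonAssocSemiring R] [Star R] {k : ℕ} (A : Matrix ι ι R)
    (u : (Fin (k + 1) → ι) → R) (K : Fin k → ι) : R :=
  ∑ i, ∑ j, A i j * u (Fin.cons i K) * star (u (Fin.cons j K))

section Levi

variable [Fintype ι] [CommSemiring R] [StarRing R] {k : ℕ}

theorem sum_leviTerm_eq_trace (A : Matrix ι ι R) (u : (Fin (k + 1) → ι) → R) :
    ∑ K, leviTerm A u K = trace (Aᵀ * (consMatrix u * (consMatrix u)ᴴ)) := by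
  simp only [leviTerm, trace, Matrix.diag, mul_apply, transpose_apply, consMatrix,
    conjTranspose_apply, of_apply, mul_sum]
  rw [sum_comm]
  conv_rhs => rw [sum_comm]
  refine sum_congr rfl fun _ _ => ?_
  rw [sum_comm]
  exact sum_congr rfl fun _ _ => sum_congr rfl fun _ _ => by ring

theorem sum_leviTerm_unitary_conj [DecidableEq ι] {U : Matrix ι ι R} (hU : U * Uᴴ = 1)
    (A : Matrix ι ι R) (u : (Fin (k + 1) → ι) → R) :
    ∑ K, leviTerm (U * A * Uᴴ) u K = ∑ K, leviTerm A (u ᵥ* kroneckerPow (k + 1) U) K := by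
  rw [sum_leviTerm_eq_trace, sum_leviTerm_eq_trace, consMatrix_vecMul_kroneckerPow]
  simp only [conjTranspose_mul, transpose_mul, Matrix.mul_assoc]
  rw [← Matrix.mul_assoc (kroneckerPow k U), kroneckerPow_mul_conjTranspose hU, Matrix.one_mul,
    trace_mul_comm]
  simp only [Matrix.mul_assoc]
  rfl

theorem sum_leviTerm_diagonal [DecidableEq ι] (d : ι → R) (w : (Fin (k + 1) → ι) → R) :
    ∑ K, leviTerm (diagonal d) w K = ∑ J, d (J 0) * (w J * star (w J)) := by
  rw [Fintype.sum_tuple_succ, sum_comm]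
  simp [leviTerm, diagonal_apply, mul_assoc]

end Levi

namespace IsAlternatingArray

variable [Fintype ι] [CommRing R] [StarRing R] {k : ℕ} {u : (Fin (k + 1) → ι) → R}

theorem leviTerm_comp (hu : IsAlternatingArray u) (A : Matrix ι ι R) (σ : Equiv.Perm (Fin k))
    (K : Fin k → ι) : leviTerm A u (K ∘ σ) = leviTerm A u K := by
  set π : Equiv.Perm (Fin (k + 1)) := Equiv.Perm.decomposeFin.symm (0, σ)
  have hcons : ∀ i : ι, (Fin.cons i (K ∘ σ) : Fin (k + 1) → ι) = Fin.cons i K ∘ π := fun i => by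
    funext l
    refine Fin.cases ?_ (fun l => ?_) l
    · simp [π, Equiv.Perm.decomposeFin_symm_apply_zero]
    · simp [π, Equiv.Perm.decomposeFin_symm_apply_succ]
  have hsign : ((Equiv.Perm.sign π : ℤ) : R) * star ((Equiv.Perm.sign π : ℤ) : R) = 1 := by
    rcases Int.units_eq_one_or (Equiv.Perm.sign π) with h | h <;> simp [h]
  simp only [leviTerm, hcons, hu π, star_mul']
  refine sum_congr rfl fun _ _ => sum_congr rfl fun _ _ => ?_
  linear_combination (A _ _ * u _ * star (u _)) * hsign

theorem leviTerm_eq_zero_of_not_injective [IsAddTorsionFree R] (hu : IsAlternatingArray u)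
    (A : Matrix ι ι R) {K : Fin k → ι} (hK : ¬ Function.Injective K) : leviTerm A u K = 0 := by
  have h : ∀ i, u (Fin.cons i K) = 0 := fun i =>
    hu.eq_zero_of_not_injective fun h => hK (Fin.cons_injective_iff.1 h).2
  simp [leviTerm, h]

end IsAlternatingArray

theorem IsAlternatingArray.mul_sum_norm_sq_le [Fintype ι] [NormedRing R] [NormOneClass R]
    [IsAddTorsionFree R] {w : (Fin N → ι) → R} (hw : IsAlternatingArray w)
    {d : ι → ℝ} {c : ℝ}
    (hc : ∀ J : Fin N → ι, Function.Injective J → c ≤ ∑ l, d (J l)) (l₀ : Fin N) :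
    c * ∑ J, ‖w J‖ ^ 2 ≤ N * ∑ J, d (J l₀) * ‖w J‖ ^ 2 := by
  rw [← nsmul_eq_mul,
    ← sum_sum_apply_mul_eq_card_smul d _ (fun σ J => by rw [hw.norm_comp]) l₀, mul_sum]
  refine sum_le_sum fun J _ => ?_
  by_cases hJ : Function.Injective J
  · exact mul_le_mul_of_nonneg_right (hc J hJ) (by positivity)
  · simp [hw.eq_zero_of_not_injective hJ]

theorem Matrix.IsHermitian.eigenvectorUnitary_mul_conjTranspose {𝕜 : Type*} [RCLike 𝕜]
    [Fintype ι] [DecidableEq ι] {r : Matrix ι ι 𝕜} (hr : r.IsHermitian) :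
    (hr.eigenvectorUnitary : Matrix ι ι 𝕜) * (hr.eigenvectorUnitary : Matrix ι ι 𝕜)ᴴ = 1 :=
  Unitary.mul_star_self_of_mem hr.eigenvectorUnitary.2

theorem Matrix.IsHermitian.sum_leviTerm_eq {𝕜 : Type*} [RCLike 𝕜] [Fintype ι] [DecidableEq ι]
    {r : Matrix ι ι 𝕜} (hr : r.IsHermitian) {k : ℕ} (u : (Fin (k + 1) → ι) → 𝕜) :
    ∑ K, leviTerm r u K = ((∑ J, hr.eigenvalues (J 0) *
      ‖(u ᵥ* kroneckerPow (k + 1) (hr.eigenvectorUnitary : Matrix ι ι 𝕜)) J‖ ^ 2 : ℝ) : 𝕜) := by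
  have hspec := hr.spectral_theorem
  rw [Unitary.conjStarAlgAut_apply, star_eq_conjTranspose] at hspec
  conv_lhs =>
    rw [hspec, sum_leviTerm_unitary_conj hr.eigenvectorUnitary_mul_conjTranspose,
      sum_leviTerm_diagonal]
  simp [RCLike.star_def, RCLike.mul_conj]

theorem Finset.sum_le_sum_of_card_le_of_le {M : Type*} [AddCommMonoid M] [LinearOrder M]
    [IsOrderedAddMonoid M] [DecidableEq ι] {s t : Finset ι} {f : ι → M} (hcard : #t ≤ #s)
    (hf : ∀ x ∈ t, ∀ y ∈ s \ t, f x ≤ f y) (hf₀ : ∀ y ∈ s \ t, 0 ≤ f y) :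
    ∑ x ∈ t, f x ≤ ∑ x ∈ s, f x := by
  rw [← sum_inter_add_sum_sdiff t s, ← sum_inter_add_sum_sdiff s t, inter_comm]
  gcongr _ + ?_
  have hcard' : #(t \ s) ≤ #(s \ t) := by
    have := card_sdiff_add_card_inter t s
    have := card_sdiff_add_card_inter s t
    rw [inter_comm] at this
    omega
  rcases (s \ t).eq_empty_or_nonempty with h | h
  · rw [h, card_empty, Nat.le_zero, card_eq_zero] at hcard'
    simp [h, hcard']
  obtain ⟨y, hy, hmin⟩ := exists_min_image (s \ t) f h
  calc ∑ x ∈ t \ s, f x ≤ #(t \ s) • f y :=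
        sum_le_card_nsmul _ _ _ fun x hx => hf x (mem_sdiff.1 hx).1 y hy
    _ ≤ #(s \ t) • f y := nsmul_le_nsmul_left (hf₀ y hy) hcard'
    _ ≤ ∑ x ∈ s \ t, f x := card_nsmul_le_sum _ _ _ hmin

theorem sum_filter_lt_le_sum_comp_of_injective {M : Type*} [AddCommMonoid M] [LinearOrder M]
    [IsOrderedAddMonoid M] {m q : ℕ} {lam : Fin m → M} (hmono : Monotone lam)
    (hnn : ∀ j, 0 ≤ lam j) (hqN : q ≤ N) {T : Fin N → Fin m} (hT : Function.Injective T) :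
    ∑ j ∈ univ.filter fun j : Fin m => (j : ℕ) < q, lam j ≤ ∑ l, lam (T l) := by
  rw [← sum_image hT.injOn]
  refine sum_le_sum_of_card_le_of_le ?_ (fun x hx y hy => hmono ?_) fun y _ => hnn y
  · rw [card_image_of_injective _ hT, card_univ, Fintype.card_fin]
    calc #(univ.filter fun j : Fin m => (j : ℕ) < q) ≤ #(range q) :=
          card_le_card_of_injOn Fin.val (fun j hj => by simpa using hj) Fin.val_injective.injOn
      _ ≤ N := by simpa using hqN
  · simp only [mem_filter, mem_univ, true_and, mem_sdiff] at hx hy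
    rw [Fin.le_def]
    omega

open scoped Classical ComplexOrder in
theorem stmt_4_general {m k q : ℕ} (hqk : q ≤ k + 1)
    (r : Matrix (Fin m) (Fin m) ℂ) (hr : r.IsHermitian) (hpsd : r.PosSemidef)
    (lam : Fin m → ℝ) (hmono : Monotone lam)
    (hperm : ∃ σ : Equiv.Perm (Fin m), lam = hr.eigenvalues ∘ σ)
    (u : (Fin (k + 1) → Fin m) → ℂ)
    (halt : ∀ (σ : Equiv.Perm (Fin (k + 1))) (J : Fin (k + 1) → Fin m),
      u (J ∘ σ) = ((Equiv.Perm.sign σ : ℤ) : ℂ) * u J) :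
    (∑ j ∈ Finset.univ.filter fun j : Fin m => (j : ℕ) < q, lam j) *
        ∑ J : Fin (k + 1) → Fin m, (if StrictMono J then ‖u J‖ ^ 2 else 0)
      ≤ (∑ K : Fin k → Fin m, if StrictMono K then
          ∑ i : Fin m, ∑ j : Fin m,
            r i j * u (Fin.cons i K) * star (u (Fin.cons j K)) else 0).re := by
  obtain ⟨σ, rfl⟩ := hperm
  change _ ≤ RCLike.re (∑ K, if StrictMono K then leviTerm r u K else 0)
  have hu : IsAlternatingArray u := halt
  have hlevi := congrArg RCLike.re (hr.sum_leviTerm_eq u)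
  rw [sum_eq_factorial_smul_sum_strictMono _ (hu.leviTerm_comp r)
    fun _ => hu.leviTerm_eq_zero_of_not_injective r, map_nsmul, RCLike.ofReal_re,
    nsmul_eq_mul] at hlevi
  have hsmallest : ∀ J : Fin (k + 1) → Fin m, Function.Injective J →
      ∑ j ∈ univ.filter fun j : Fin m => (j : ℕ) < q, hr.eigenvalues (σ j)
        ≤ ∑ l, hr.eigenvalues (J l) := fun J hJ => by
    simpa using sum_filter_lt_le_sum_comp_of_injective hmono
      (fun j => hpsd.eigenvalues_nonneg _) hqk (σ.symm.injective.comp hJ)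
  have hbound := (hu.vecMul_kroneckerPow (hr.eigenvectorUnitary : Matrix _ _ ℂ)).mul_sum_norm_sq_le
    hsmallest 0
  rw [sum_norm_sq_vecMul (kroneckerPow_mul_conjTranspose hr.eigenvectorUnitary_mul_conjTranspose),
    sum_eq_factorial_smul_sum_strictMono _ (fun σ J => by rw [hu.norm_comp]) fun J hJ => by
      simp [hu.eq_zero_of_not_injective hJ], nsmul_eq_mul, Nat.factorial_succ] at hbound
  push_cast at hbound
  simp only [Function.comp_apply]
  refine le_of_mul_le_mul_left ?_ (by positivity : (0 : ℝ) < (k + 1) * k.factorial)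
  linear_combination hbound - ((k : ℝ) + 1) * hlevi

open scoped Classical ComplexOrder in
/-- The Levi form acting on alternating arrays indexed by increasing
multi-indices of length `k+1 ≥ q` is bounded below by the sum of the `q`
smallest eigenvalues times the squared norm of the array. -/
theorem stmt_4 {m k q : ℕ} (hq1 : 1 ≤ q) (hqm : q ≤ m) (hqk : q ≤ k + 1)
    (r : Matrix (Fin m) (Fin m) ℂ) (hr : r.IsHermitian) (hpsd : r.PosSemidef)
    (lam : Fin m → ℝ) (hmono : Monotone lam)
    (hperm : ∃ σ : Equiv.Perm (Fin m), lam = hr.eigenvalues ∘ σ)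
    (u : (Fin (k + 1) → Fin m) → ℂ)
    (halt : ∀ (σ : Equiv.Perm (Fin (k + 1))) (J : Fin (k + 1) → Fin m),
      u (J ∘ σ) = ((Equiv.Perm.sign σ : ℤ) : ℂ) * u J) :
    (∑ j ∈ Finset.univ.filter fun j : Fin m => (j : ℕ) < q, lam j) *
        ∑ J : Fin (k + 1) → Fin m, (if StrictMono J then ‖u J‖ ^ 2 else 0)
      ≤ (∑ K : Fin k → Fin m, if StrictMono K then
          ∑ i : Fin m, ∑ j : Fin m,
            r i j * u (Fin.cons i K) * star (u (Fin.cons j K)) else 0).re :=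
  stmt_4_general hqk r hr hpsd lam hmono hperm u halt
end

section
/- Let δ_i^φ = L_i − L_i(φ) be the twisted derivative associated to a smooth real function φ and smooth complex vector fields L₁,…,L_n with [L_i, \bar L_j] = r_{ij} T + Σ_h c^h_{ij} L_h − Σ_h \bar c^h_{ji} \bar L_h, where T = L_n − \bar L_n. Define φ_{ij} := \bar L_j L_i(φ) + Σ_{k=1}^{n} c^k_{ij} L_k(φ). Then the commutator satisfies [δ_i^φ, \bar L_j] u = φ_{ij} u + r_{ij}(δ_n^φ u − \bar L_n u) + Σ_{k=1}^{n-1} c^k_{ij} δ_k^φ(u) − Σ_{k=1}^{n-1} \bar c^k_{ji} \bar L_k(u) for all smooth functions u. -/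
/-- The key commutator computation in the Morrey–Kohn–Hörmander formula:
`[δᵢ^φ, L̄ⱼ] u = φᵢⱼ u + rᵢⱼ(δₙ^φ u − L̄ₙ u) + Σₖ cᵏᵢⱼ δₖ^φ u − Σₖ c̄ᵏⱼᵢ L̄ₖ u`,
where `δᵢ^φ = Lᵢ − Lᵢ(φ)` and the fields act as derivations on the algebra `A`
of smooth functions. -/
theorem stmt_15 {A : Type*} [CommRing A] [Algebra ℂ A] {n : ℕ}
    (L Lb : Fin (n + 1) → Module.End ℂ A)
    (hL : ∀ i (a b : A), L i (a * b) = a * L i b + L i a * b)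
    (hLb : ∀ i (a b : A), Lb i (a * b) = a * Lb i b + Lb i a * b)
    (r : Fin (n + 1) → Fin (n + 1) → A)
    (c cb : Fin (n + 1) → Fin (n + 1) → Fin (n + 1) → A)
    (T : Module.End ℂ A) (hT : T = L (Fin.last n) - Lb (Fin.last n))
    (hbracket : ∀ i j, ⁅L i, Lb j⁆ =
      LinearMap.mul ℂ A (r i j) * T
      + ∑ h : Fin n, LinearMap.mul ℂ A (c h.castSucc i j) * L h.castSucc
      - ∑ h : Fin n, LinearMap.mul ℂ A (cb h.castSucc j i) * Lb h.castSucc)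
    (hcn : ∀ i j, c (Fin.last n) i j = r i j)
    (φ : A)
    (δ : Fin (n + 1) → Module.End ℂ A)
    (hδ : ∀ i, δ i = L i - LinearMap.mul ℂ A (L i φ))
    (φij : Fin (n + 1) → Fin (n + 1) → A)
    (hφij : ∀ i j, φij i j = Lb j (L i φ) + ∑ k : Fin (n + 1), c k i j * L k φ) :
    ∀ i j (u : A), ⁅δ i, Lb j⁆ u =
      φij i j * u + r i j * (δ (Fin.last n) u - Lb (Fin.last n) u)
      + ∑ k : Fin n, c k.castSucc i j * δ k.castSucc u
      - ∑ k : Fin n, cb k.castSucc j i * Lb k.castSucc u := by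
  intro i j u
  have key := congrArg (fun f : Module.End ℂ A => f u) (hbracket i j)
  simp only [Ring.lie_def, hT, hδ, LinearMap.sub_apply, LinearMap.add_apply,
    Module.End.mul_apply, LinearMap.mul_apply', LinearMap.sum_apply, map_sub] at key ⊢
  rw [hφij, Fin.sum_univ_castSucc, hcn]
  rw [hLb j (L i φ) u]
  simp only [mul_sub, Finset.sum_sub_distrib]
  have hs : u * ∑ k : Fin n, c k.castSucc i j * L k.castSucc φ
      = ∑ k : Fin n, c k.castSucc i j * (L k.castSucc φ * u) := by
    rw [Finset.mul_sum]; exact Finset.sum_congr rfl fun k _ => by ring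
  linear_combination key - hs
end
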